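/- arXiv:1207.7338 — 2 statements merged into one kernel-verified Lean document; each statement's English description precedes it below -/
import Mathlib

section
/- Let (^⊥X, F(X)) be the torsion pair associated to X ⊆ S (S a simple-minded system in T with Serre functor ν, ν(X[1]) = X). For any minimal triangle aM →f M →g bM → and any X ∈ X: (a) composition with g gives an isomorphism Hom(bM, X) ≅ Hom(M, X); (b) composition with f gives a monomorphism Hom(X, aM) → Hom(X, M); (c) if M ∈ X^⊥ then aM ∈ ^⊥X ∩ X^⊥. -/
open CategoryTheory Limits Pretriangulated

universe v u

variable {C : Type u} [Category.{v} C] [Preadditive C] [HasZeroObject C]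
  [HasShift C ℤ] [∀ n : ℤ, (shiftFunctor C n).Additive] [Pretriangulated C]

/-- The extension class `S * T`: objects `X` admitting a distinguished triangle
`A ⟶ X ⟶ B ⟶ A⟦1⟧` with `A ∈ S` and `B ∈ T`. -/
def extStar (S T : Set C) : Set C :=
  {X | ∃ (A B : C) (f : A ⟶ X) (g : X ⟶ B) (h : B ⟶ A⟦(1:ℤ)⟧),
    Triangle.mk f g h ∈ (distTriang C) ∧ A ∈ S ∧ B ∈ T}

/-- The filtration classes `(S)ₙ`, built from the right. -/
def filt (S : Set C) : ℕ → Set C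
  | 0 => {X : C | IsZero X}
  | (n+1) => extStar (filt S n) (S ∪ {X : C | IsZero X})

/-- The filtration classes `ₙ(S)`, built from the left. -/
def filt' (S : Set C) : ℕ → Set C
  | 0 => {X : C | IsZero X}
  | (n+1) => extStar (S ∪ {X : C | IsZero X}) (filt' S n)

/-- The filtration subcategory `F(S) = ⋃ₙ (S)ₙ` generated by `S`. -/
def filtClosure (S : Set C) : Set C := {X | ∃ n, X ∈ filt S n}

/-- A set of pairwise orthogonal bricks: no nonzero maps between distinct members,
and every endomorphism ring is a division ring. -/
def OrthogonalBricks (S : Set C) : Prop :=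
  (∀ X ∈ S, ¬ IsZero X ∧ ∀ f : X ⟶ X, f ≠ 0 → IsIso f) ∧
  (∀ X ∈ S, ∀ Y ∈ S, X ≠ Y → ∀ f : X ⟶ Y, f = 0)

/-- A simple-minded system: a set of pairwise orthogonal bricks whose extension
closure is the whole category. -/
def SimpleMindedSystem (S : Set C) : Prop :=
  OrthogonalBricks S ∧ ∀ X : C, X ∈ filtClosure S

/-- `S^⊥`: objects receiving no nonzero map from objects of `S`. -/
def rightOrth (S : Set C) : Set C := {Y : C | ∀ X ∈ S, ∀ f : X ⟶ Y, f = 0}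

/-- `^⊥S`: objects admitting no nonzero map to objects of `S`. -/
def leftOrth (S : Set C) : Set C := {Y : C | ∀ X ∈ S, ∀ f : Y ⟶ X, f = 0}

/-- `f : A ⟶ M` is a right `T1`-approximation. -/
def IsRightApprox (T1 : Set C) {A M : C} (f : A ⟶ M) : Prop :=
  ∀ A' ∈ T1, ∀ u : A' ⟶ M, ∃ v : A' ⟶ A, v ≫ f = u

/-- `g : M ⟶ B` is a left `T2`-approximation. -/
def IsLeftApprox (T2 : Set C) {M B : C} (g : M ⟶ B) : Prop :=
  ∀ B' ∈ T2, ∀ u : M ⟶ B', ∃ v : B ⟶ B', g ≫ v = u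

/-- `f` is right minimal. -/
def RightMinimal {A M : C} (f : A ⟶ M) : Prop :=
  ∀ u : A ⟶ A, u ≫ f = f → IsIso u

/-- `g` is left minimal. -/
def LeftMinimal {M B : C} (g : M ⟶ B) : Prop :=
  ∀ u : B ⟶ B, g ≫ u = g → IsIso u

/-- A minimal `(T1,T2)`-triangle: a distinguished triangle `A ⟶ M ⟶ B ⟶ A⟦1⟧` with
`A ∈ T1`, `B ∈ T2`, and `A ⟶ M` a minimal right `T1`-approximation. -/
def MinTriangle (T1 T2 : Set C) {A M B : C} (f : A ⟶ M) (g : M ⟶ B)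
    (h : B ⟶ A⟦(1:ℤ)⟧) : Prop :=
  Triangle.mk f g h ∈ (distTriang C) ∧ A ∈ T1 ∧ B ∈ T2 ∧
    IsRightApprox T1 f ∧ RightMinimal f

variable (k : Type*) [Field k] [Linear k C]

/-- `e` is a Serre duality for the auto-equivalence `ν`: natural `k`-linear
isomorphisms `Hom(X,Y) ≅ D Hom(Y, νX)`. -/
def SerreDuality (ν : C ⥤ C)
    (e : ∀ X Y : C, (X ⟶ Y) ≃ₗ[k] Module.Dual k (Y ⟶ ν.obj X)) : Prop :=
  (∀ (X' X Y : C) (u : X' ⟶ X) (g : X ⟶ Y) (h : Y ⟶ ν.obj X'),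
      e X' Y (u ≫ g) h = e X Y g (h ≫ ν.map u)) ∧
  (∀ (X Y Y' : C) (g : X ⟶ Y) (v : Y ⟶ Y') (h : Y' ⟶ ν.obj X),
      e X Y' (g ≫ v) h = e X Y g (v ≫ h))

/-- A class of objects `X` is stable under `ν ∘ [1]` (up to isomorphism):
`ν(X[1]) = X`. -/
def NuShiftStable (ν : C ⥤ C) (X : Set C) : Prop :=
  (∀ Y ∈ X, ∃ Z ∈ X, Nonempty (ν.obj (Y⟦(1:ℤ)⟧) ≅ Z)) ∧
  (∀ Z ∈ X, ∃ Y ∈ X, Nonempty (ν.obj (Y⟦(1:ℤ)⟧) ≅ Z))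

/-!
If `c : Y ⟶ aM` with `Y ∈ X` is nonzero, its cone `Cn` lies again in `^⊥X`: a map `Cn ⟶ Z`
with `Z ∈ X` factors through `Cn ⟶ Y⟦1⟧`, and since `Z ≅ ν(Y'⟦1⟧)`, Serre duality reduces its
vanishing to that of all composites `Y'⟦1⟧ ⟶ Cn ⟶ Y⟦1⟧`, which holds because `X` consists of
orthogonal bricks and `c ≠ 0`. Then `f` factors through `aM ⟶ Cn`, and right minimality of `f`
makes that map split mono, forcing `c = 0`. So `Hom(X, aM) → Hom(X, M)` is injective, which gives
(b) and (c); shifting it and applying Serre duality once more to `bM ⟶ aM⟦1⟧` gives (a).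
-/

section Preadditive

omit [HasZeroObject C] [HasShift C ℤ] [∀ n : ℤ, (shiftFunctor C n).Additive] [Pretriangulated C]

lemma OrthogonalBricks.mono {S X : Set C} (hS : OrthogonalBricks S) (hX : X ⊆ S) :
    OrthogonalBricks X :=
  ⟨fun Y hY => hS.1 Y (hX hY), fun Y hY Z hZ => hS.2 Y (hX hY) Z (hX hZ)⟩

lemma OrthogonalBricks.eq_zero_of_comp_eq_zero {X : Set C} (hX : OrthogonalBricks X)
    {Y' Y A : C} (hY' : Y' ∈ X) (hY : Y ∈ X) {c : Y ⟶ A} (hc : c ≠ 0) (ψ : Y' ⟶ Y)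
    (hψc : ψ ≫ c = 0) : ψ = 0 := by
  by_cases hYY : Y' = Y
  · subst hYY
    by_contra hψ
    have := (hX.1 Y' hY').2 ψ hψ
    exact hc ((cancel_epi ψ).1 (hψc.trans comp_zero.symm))
  · exact hX.2 Y' hY' Y hY hYY ψ

lemma SerreDuality.comp_eq_zero {ν : C ⥤ C}
    {e : ∀ X Y : C, (X ⟶ Y) ≃ₗ[k] Module.Dual k (Y ⟶ ν.obj X)} (he : SerreDuality k ν e)
    {W P Q : C} {q : P ⟶ Q} (hq : ∀ s : W ⟶ P, s ≫ q = 0) (t : Q ⟶ ν.obj W) :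
    q ≫ t = 0 := by
  rw [← Module.forall_dual_apply_eq_zero_iff k]
  intro φ
  obtain ⟨s, rfl⟩ := (e W P).surjective φ
  rw [← he.2, hq, map_zero, LinearMap.zero_apply]

end Preadditive

omit [HasZeroObject C] [Pretriangulated C] in
lemma eq_zero_of_comp_shift_map_eq_zero {W A M : C} {f : A ⟶ M}
    (hf : ∀ c : W ⟶ A, c ≫ f = 0 → c = 0) {d : W⟦(1:ℤ)⟧ ⟶ A⟦(1:ℤ)⟧}
    (hd : d ≫ f⟦(1:ℤ)⟧' = 0) : d = 0 := by
  obtain ⟨c, rfl⟩ := (shiftFunctor C (1:ℤ)).map_surjective d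
  rw [← Functor.map_comp, ← (shiftFunctor C (1:ℤ)).map_zero] at hd
  rw [hf c ((shiftFunctor C (1:ℤ)).map_injective hd), Functor.map_zero]

omit [HasZeroObject C] [∀ n : ℤ, (shiftFunctor C n).Additive] [Pretriangulated C] in
lemma SerreDuality.comp_eq_zero_of_nuShiftStable {ν : C ⥤ C}
    {e : ∀ X Y : C, (X ⟶ Y) ≃ₗ[k] Module.Dual k (Y ⟶ ν.obj X)} (he : SerreDuality k ν e)
    {X : Set C} (hstab : NuShiftStable ν X) {P Q : C} {q : P ⟶ Q}
    (hq : ∀ Y ∈ X, ∀ s : Y⟦(1:ℤ)⟧ ⟶ P, s ≫ q = 0) {Z : C} (hZ : Z ∈ X) (t : Q ⟶ Z) :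
    q ≫ t = 0 := by
  obtain ⟨Y, hY, ⟨ι⟩⟩ := hstab.2 Z hZ
  rw [← cancel_mono ι.inv, zero_comp, Category.assoc]
  exact he.comp_eq_zero k (hq Y hY) (t ≫ ι.inv)

lemma RightMinimal.eq_zero_of_cone_mem {T : Set C} {A M : C} {f : A ⟶ M}
    (hmin : RightMinimal f) (happ : IsRightApprox T f) {Y Cn : C} {c : Y ⟶ A}
    {p : A ⟶ Cn} {q : Cn ⟶ Y⟦(1:ℤ)⟧} (hT : Triangle.mk c p q ∈ distTriang C) (hCn : Cn ∈ T)
    (hcf : c ≫ f = 0) : c = 0 := by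
  obtain ⟨m, hm⟩ := Triangle.yoneda_exact₂ _ hT f hcf
  obtain ⟨s, hs⟩ := happ Cn hCn m
  have : IsIso (p ≫ s) := hmin _ (by rw [Category.assoc, hs]; exact hm.symm)
  have hcp : c ≫ p = 0 := comp_distTriang_mor_zero₁₂ _ hT
  rw [← cancel_mono (p ≫ s), zero_comp, ← Category.assoc, hcp, zero_comp]

lemma SerreDuality.mem_leftOrth_of_distTriang {ν : C ⥤ C}
    {e : ∀ X Y : C, (X ⟶ Y) ≃ₗ[k] Module.Dual k (Y ⟶ ν.obj X)} (he : SerreDuality k ν e)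
    {X : Set C} (hstab : NuShiftStable ν X) {Y A Cn : C} {c : Y ⟶ A} {p : A ⟶ Cn}
    {q : Cn ⟶ Y⟦(1:ℤ)⟧} (hT : Triangle.mk c p q ∈ distTriang C) (hA : A ∈ leftOrth X)
    (hq : ∀ Y' ∈ X, ∀ s : Y'⟦(1:ℤ)⟧ ⟶ Cn, s ≫ q = 0) : Cn ∈ leftOrth X := by
  intro Z hZ u
  obtain ⟨t, rfl⟩ := Triangle.yoneda_exact₃ _ hT u (hA Z hZ _)
  exact he.comp_eq_zero_of_nuShiftStable k hstab hq hZ t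

lemma SerreDuality.eq_zero_of_comp_minimal_leftOrth_approx_eq_zero {ν : C ⥤ C}
    {e : ∀ X Y : C, (X ⟶ Y) ≃ₗ[k] Module.Dual k (Y ⟶ ν.obj X)} (he : SerreDuality k ν e)
    {X : Set C} (hX : OrthogonalBricks X) (hstab : NuShiftStable ν X) {A M : C} {f : A ⟶ M}
    (hA : A ∈ leftOrth X) (happ : IsRightApprox (leftOrth X) f) (hmin : RightMinimal f)
    {Y : C} (hY : Y ∈ X) {c : Y ⟶ A} (hcf : c ≫ f = 0) : c = 0 := by
  by_contra hc
  obtain ⟨Cn, p, q, hT⟩ := distinguished_cocone_triangle c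
  have hqc : q ≫ c⟦(1:ℤ)⟧' = 0 := comp_distTriang_mor_zero₃₁ _ hT
  have hq : ∀ Y' ∈ X, ∀ s : Y'⟦(1:ℤ)⟧ ⟶ Cn, s ≫ q = 0 := fun Y' hY' s =>
    eq_zero_of_comp_shift_map_eq_zero (hX.eq_zero_of_comp_eq_zero hY' hY hc)
      (by rw [Category.assoc, hqc, comp_zero])
  exact hc (hmin.eq_zero_of_cone_mem happ hT (he.mem_leftOrth_of_distTriang k hstab hT hA hq) hcf)

theorem min_triangle_hom_properties (ν : C ⥤ C)
    (e : ∀ X Y : C, (X ⟶ Y) ≃ₗ[k] Module.Dual k (Y ⟶ ν.obj X))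
    (he : SerreDuality k ν e)
    (S X : Set C) (hS : SimpleMindedSystem S) (hX : X ⊆ S)
    (hstab : NuShiftStable ν X)
    (A M B : C) (f : A ⟶ M) (g : M ⟶ B) (h : B ⟶ A⟦(1:ℤ)⟧)
    (hmin : MinTriangle (leftOrth X) (filtClosure X) f g h)
    (X₁ : C) (hX₁ : X₁ ∈ X) :
    Function.Bijective (fun u : B ⟶ X₁ => g ≫ u) ∧
    Function.Injective (fun u : X₁ ⟶ A => u ≫ f) ∧
    (M ∈ rightOrth X → A ∈ leftOrth X ∩ rightOrth X) := by
  obtain ⟨hT, hA, -, happ, hminf⟩ := hmin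
  have key : ∀ Y ∈ X, ∀ c : Y ⟶ A, c ≫ f = 0 → c = 0 := fun _ hY _ =>
    he.eq_zero_of_comp_minimal_leftOrth_approx_eq_zero k (hS.1.mono hX) hstab hA happ hminf hY
  refine ⟨⟨?_, fun w => ?_⟩, ?_, fun hM => ⟨hA, fun Y hY c => key Y hY c (hM Y hY _)⟩⟩
  · refine (injective_iff_map_eq_zero (Preadditive.leftComp X₁ g)).2 fun u hu => ?_
    obtain ⟨w, rfl⟩ : ∃ w : A⟦(1:ℤ)⟧ ⟶ X₁, u = h ≫ w := Triangle.yoneda_exact₃ _ hT u hu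
    have hhf : h ≫ f⟦(1:ℤ)⟧' = 0 := comp_distTriang_mor_zero₃₁ _ hT
    refine he.comp_eq_zero_of_nuShiftStable k hstab (fun Y hY s => ?_) hX₁ w
    exact eq_zero_of_comp_shift_map_eq_zero (key Y hY) (by rw [Category.assoc, hhf, comp_zero])
  · obtain ⟨v, hv⟩ := Triangle.yoneda_exact₂ _ hT w (hA X₁ hX₁ _)
    exact ⟨v, hv.symm⟩
  · exact (injective_iff_map_eq_zero (Preadditive.rightComp X₁ f)).2 (key X₁ hX₁)
end

section
/- Let T have Serre functor ν, S a simple-minded system, X ⊆ S with ν(X[1]) = X. Then μ⁻_X(μ⁺_X(S)) = S = μ⁺_X(μ⁻_X(S)); that is, left and right mutation at X are mutually inverse operations on simple-minded systems. -/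
open CategoryTheory Limits Pretriangulated

universe v u

variable {C : Type u} [Category.{v} C] [Preadditive C] [HasZeroObject C]
  [HasShift C ℤ] [∀ n : ℤ, (shiftFunctor C n).Additive] [Pretriangulated C]

variable (k : Type*) [Field k] [Linear k C]

/-!
Fix `Y ∈ S \ X`; then `Y` is a brick in `F(X)^⊥ ∩ ⊥F(X)`. Rotating the minimal triangle
`α Y → Y[-1] → B → (α Y)[1]` gives a triangle `B → (α Y)[1] → Y → B[1]` whose first map is a
right `F(X)`-approximation, since `Y ∈ F(X)^⊥`. The minimal right `F(X)`-approximation of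
`(α Y)[1]` is a retract of every right approximation, so its cone `β (α Y)` is a retract of the
brick `Y`, hence `0` or isomorphic to `Y`. It cannot be `0`: that would force `Y[-1] ∈ F(X)`, so
`ν Y ∈ F(X)` because `ν(X[1]) = X`, and then Serre duality `Hom(Y, Y) ≅ D Hom(Y, ν Y) = 0` kills
`Y`. Dually, `α (β Y)` is a retract of `Y` itself; if it were `0` then `Y[1] ∈ F(X)`, so
`Y ≅ ν M` with `M ∈ F(X)` by the other half of `ν(X[1]) = X`, and Serre duality
`Hom(M, M) ≅ D Hom(M, ν M) = D Hom(M, Y) = 0` kills `M`, hence `Y`.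
-/

section

omit [HasZeroObject C] [HasShift C ℤ] [∀ n : ℤ, (shiftFunctor C n).Additive]
  [Pretriangulated C]

variable {k}

lemma isZero_of_mem_leftOrth_self {S : Set C} {Y : C} (hY : Y ∈ S) (hYl : Y ∈ leftOrth S) :
    IsZero Y :=
  (IsZero.iff_id_eq_zero Y).2 (hYl Y hY _)

lemma isZero_of_mem_rightOrth_self {S : Set C} {Y : C} (hY : Y ∈ S) (hYr : Y ∈ rightOrth S) :
    IsZero Y :=
  (IsZero.iff_id_eq_zero Y).2 (hYr Y hY _)

section

omit [Preadditive C]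

lemma RightMinimal.isIso_comp {A₁ A₂ M : C} {f₁ : A₁ ⟶ M} {f₂ : A₂ ⟶ M} (hf₁ : RightMinimal f₁)
    {v : A₁ ⟶ A₂} {w : A₂ ⟶ A₁} (hv : v ≫ f₂ = f₁) (hw : w ≫ f₁ = f₂) : IsIso (v ≫ w) :=
  hf₁ _ (by rw [Category.assoc, hw, hv])

lemma RightMinimal.isIso_of_comp_eq_id {A M : C} {f : A ⟶ M} (hf : RightMinimal f)
    {s : M ⟶ A} (hs : s ≫ f = 𝟙 M) : IsIso f := by
  have : IsIso (f ≫ s) := hf _ (by rw [Category.assoc, hs, Category.comp_id])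
  have : Mono f := mono_of_mono_fac (h := f ≫ s) rfl
  have : IsSplitEpi f := IsSplitEpi.mk' ⟨s, hs⟩
  exact isIso_of_mono_of_isSplitEpi f

lemma nonempty_retract_of_isRightApprox {T : Set C} {A₁ A₂ M : C} {f₁ : A₁ ⟶ M} {f₂ : A₂ ⟶ M}
    (h₁ : IsRightApprox T f₁) (hmin : RightMinimal f₁) (hA₁ : A₁ ∈ T)
    (h₂ : IsRightApprox T f₂) (hA₂ : A₂ ∈ T) : Nonempty (Retract A₁ A₂) := by
  obtain ⟨v, hv⟩ := h₂ A₁ hA₁ f₁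
  obtain ⟨w, hw⟩ := h₁ A₂ hA₂ f₂
  have := hmin.isIso_comp hv hw
  exact ⟨⟨v, w ≫ inv (v ≫ w), by rw [← Category.assoc, IsIso.hom_inv_id]⟩⟩

end

lemma RightMinimal.isZero_of_eq_zero {A M : C} {f : A ⟶ M} (hf : RightMinimal f) (h0 : f = 0) :
    IsZero A := by
  have : IsIso (0 : A ⟶ A) := hf 0 (by rw [zero_comp, h0])
  exact IsZero.of_mono_zero A A

lemma CategoryTheory.Retract.nonempty_iso_of_brick {V Y : C} (h : Retract V Y) (hV : ¬ IsZero V)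
    (hY : ∀ f : Y ⟶ Y, f ≠ 0 → IsIso f) : Nonempty (V ≅ Y) := by
  have hri : h.r ≫ h.i ≠ 0 := fun h0 ↦ hV <| (IsZero.iff_id_eq_zero V).2 <|
    calc 𝟙 V = h.i ≫ (h.r ≫ h.i) ≫ h.r := by simp
      _ = 0 := by rw [h0, zero_comp, comp_zero]
  have := hY _ hri
  have hid : h.r ≫ h.i = 𝟙 Y := by
    rw [← cancel_epi (h.r ≫ h.i)]
    simp [reassoc_of% h.retract]
  exact ⟨⟨h.i, h.r, h.retract, hid⟩⟩

lemma isZero_of_forall_hom_serre_eq_zero {ν : C ⥤ C} {Y : C}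
    (e : (Y ⟶ Y) ≃ₗ[k] Module.Dual k (Y ⟶ ν.obj Y)) (h : ∀ f : Y ⟶ ν.obj Y, f = 0) :
    IsZero Y := by
  rw [IsZero.iff_id_eq_zero]
  apply e.injective
  ext φ
  simp [h φ]

end

lemma mem_extStar_of_iso {S₁ S₂ : Set C} {T : Triangle C} (hT : T ∈ distTriang C)
    {A B : C} (eA : T.obj₁ ≅ A) (eB : T.obj₃ ≅ B) (hA : A ∈ S₁) (hB : B ∈ S₂) :
    T.obj₂ ∈ extStar S₁ S₂ := by
  refine ⟨A, B, eA.inv ≫ T.mor₁, T.mor₂ ≫ eB.hom, eB.inv ≫ T.mor₃ ≫ eA.hom⟦(1:ℤ)⟧', ?_, hA, hB⟩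
  refine isomorphic_distinguished _ hT _ (Triangle.isoMk _ _ eA.symm (Iso.refl _) eB.symm ?_ ?_ ?_)
  all_goals simp [Triangle.mk]

lemma mem_filt_of_iso {S : Set C} {n : ℕ} {M N : C} (e : M ≅ N) (h : M ∈ filt S n) :
    N ∈ filt S n := by
  cases n with
  | zero => exact IsZero.of_iso h e.symm
  | succ n =>
    obtain ⟨A, B, f, g, h, hT, hA, hB⟩ := h
    exact mem_extStar_of_iso (T := Triangle.mk (f ≫ e.hom) (e.inv ≫ g) h)
      (isomorphic_distinguished _ hT _ (Triangle.isoMk _ _ (Iso.refl _) e.symm (Iso.refl _)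
        (by simp [Triangle.mk]) (by simp [Triangle.mk]) (by simp [Triangle.mk])))
      (Iso.refl _) (Iso.refl _) hA hB

lemma mem_filtClosure_of_iso {S : Set C} {M N : C} (e : M ≅ N) (h : M ∈ filtClosure S) :
    N ∈ filtClosure S :=
  h.imp fun _ ↦ mem_filt_of_iso e

lemma rightOrth_subset_rightOrth_filtClosure (S : Set C) :
    rightOrth S ⊆ rightOrth (filtClosure S) := by
  rintro Y hY M ⟨n, hM⟩
  induction n generalizing M with
  | zero => exact fun φ ↦ IsZero.eq_of_src hM φ 0
  | succ n ih =>
    obtain ⟨A, B, f, g, h, hT, hA, hB⟩ := hM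
    intro φ
    obtain ⟨ψ : B ⟶ Y, rfl⟩ := Triangle.yoneda_exact₂ _ hT φ (ih A hA _)
    obtain hB | hB := hB
    · rw [hY B hB ψ]; exact comp_zero
    · rw [hB.eq_of_src ψ 0]; exact comp_zero

lemma leftOrth_subset_leftOrth_filtClosure (S : Set C) :
    leftOrth S ⊆ leftOrth (filtClosure S) := by
  rintro Y hY M ⟨n, hM⟩
  induction n generalizing M with
  | zero => exact fun φ ↦ IsZero.eq_of_tgt hM φ 0
  | succ n ih =>
    obtain ⟨A, B, f, g, h, hT, hA, hB⟩ := hM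
    intro φ
    have hφg : φ ≫ g = 0 := by
      obtain hB | hB := hB
      · exact hY B hB _
      · exact hB.eq_of_tgt _ 0
    obtain ⟨ψ : Y ⟶ A, rfl⟩ := Triangle.coyoneda_exact₂ _ hT φ hφg
    rw [ih A hA ψ]; exact zero_comp

lemma isRightApprox_of_distinguished {T : Set C} {A M Y : C} {f : A ⟶ M} {g : M ⟶ Y}
    {h : Y ⟶ A⟦(1:ℤ)⟧} (hT : Triangle.mk f g h ∈ distTriang C) (hY : Y ∈ rightOrth T) :
    IsRightApprox T f := fun A' hA' u ↦
  (Triangle.coyoneda_exact₂ _ hT u (hY A' hA' _)).imp fun _ hv ↦ hv.symm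

lemma nonempty_retract_cone_of_isRightApprox {T : Set C} {A₁ A₂ M V Y : C}
    {f₁ : A₁ ⟶ M} {g₁ : M ⟶ V} {h₁ : V ⟶ A₁⟦(1:ℤ)⟧} {f₂ : A₂ ⟶ M} {g₂ : M ⟶ Y}
    {h₂ : Y ⟶ A₂⟦(1:ℤ)⟧} (hT₁ : Triangle.mk f₁ g₁ h₁ ∈ distTriang C)
    (hT₂ : Triangle.mk f₂ g₂ h₂ ∈ distTriang C)
    (hap₁ : IsRightApprox T f₁) (hmin : RightMinimal f₁) (hA₁ : A₁ ∈ T)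
    (hap₂ : IsRightApprox T f₂) (hA₂ : A₂ ∈ T) : Nonempty (Retract V Y) := by
  obtain ⟨v, hv⟩ := hap₂ A₁ hA₁ f₁
  obtain ⟨w, hw⟩ := hap₁ A₂ hA₂ f₂
  have hv₁ : f₁ ≫ 𝟙 M = v ≫ f₂ := (Category.comp_id _).trans hv.symm
  have hw₁ : f₂ ≫ 𝟙 M = w ≫ f₁ := (Category.comp_id _).trans hw.symm
  obtain ⟨φ : V ⟶ Y, hφ₂, hφ₃⟩ :=
    complete_distinguished_triangle_morphism _ _ hT₁ hT₂ v (𝟙 M) hv₁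
  obtain ⟨ψ : Y ⟶ V, hψ₂, hψ₃⟩ :=
    complete_distinguished_triangle_morphism _ _ hT₂ hT₁ w (𝟙 M) hw₁
  let a := Triangle.homMk (Triangle.mk f₁ g₁ h₁) (Triangle.mk f₂ g₂ h₂) v (𝟙 M) φ hv₁ hφ₂ hφ₃
  let b := Triangle.homMk (Triangle.mk f₂ g₂ h₂) (Triangle.mk f₁ g₁ h₁) w (𝟙 M) ψ hw₁ hψ₂ hψ₃
  have hab₂ : IsIso (a ≫ b).hom₂ := inferInstanceAs (IsIso (𝟙 M ≫ 𝟙 M))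
  have : IsIso (φ ≫ ψ) := isIso₃_of_isIso₁₂ (a ≫ b) hT₁ hT₁ (hmin.isIso_comp hv hw) hab₂
  exact ⟨⟨φ, ψ ≫ inv (φ ≫ ψ), by rw [← Category.assoc, IsIso.hom_inv_id]⟩⟩

lemma distinguished_mk_comp_iso₃ {A B Z Z' : C} {f : A ⟶ B} {g : B ⟶ Z} {h : Z ⟶ A⟦(1:ℤ)⟧}
    (hT : Triangle.mk f g h ∈ distTriang C) (e : Z ≅ Z') :
    Triangle.mk f (g ≫ e.hom) (e.inv ≫ h) ∈ distTriang C :=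
  isomorphic_distinguished _ hT _
    (Triangle.isoMk _ _ (Iso.refl _) (Iso.refl _) e.symm (by simp [Triangle.mk])
      (by simp [Triangle.mk]) (by simp [Triangle.mk]))

lemma distinguished_iso₁_comp_mk {A A' B Z : C} {f : A ⟶ B} {g : B ⟶ Z} {h : Z ⟶ A⟦(1:ℤ)⟧}
    (hT : Triangle.mk f g h ∈ distTriang C) (e : A ≅ A') :
    Triangle.mk (e.inv ≫ f) g (h ≫ e.hom⟦(1:ℤ)⟧') ∈ distTriang C :=
  isomorphic_distinguished _ hT _
    (Triangle.isoMk _ _ e.symm (Iso.refl _) (Iso.refl _) (by simp [Triangle.mk])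
      (by simp [Triangle.mk]) (by simp [Triangle.mk]))

section Functor

variable (F : C ⥤ C) [F.CommShift ℤ] [F.IsTriangulated] (n : ℤ) {X : Set C}

lemma map_shift_mem_filt (hX : ∀ x ∈ X, ∃ z ∈ X, Nonempty (F.obj (x⟦n⟧) ≅ z)) (m : ℕ) :
    ∀ M ∈ filt X m, F.obj (M⟦n⟧) ∈ filt X m := by
  induction m with
  | zero => exact fun M hM ↦ F.map_isZero ((shiftFunctor C n).map_isZero hM)
  | succ m ih =>
    rintro M ⟨A, B, f, g, h, hT, hA, hB⟩
    have hT' := F.map_distinguished _ (Triangle.shift_distinguished _ hT n)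
    obtain hB | hB := hB
    · obtain ⟨z, hz, ⟨eB⟩⟩ := hX B hB
      exact mem_extStar_of_iso hT' (Iso.refl _) eB (ih A hA) (Or.inl hz)
    · exact mem_extStar_of_iso hT' (Iso.refl _) (Iso.refl _) (ih A hA)
        (Or.inr (F.map_isZero ((shiftFunctor C n).map_isZero hB)))

lemma map_shift_mem_filtClosure (hX : ∀ x ∈ X, ∃ z ∈ X, Nonempty (F.obj (x⟦n⟧) ≅ z)) {M : C}
    (hM : M ∈ filtClosure X) : F.obj (M⟦n⟧) ∈ filtClosure X :=
  hM.imp fun m hm ↦ map_shift_mem_filt F n hX m M hm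

variable [F.Full]

lemma exists_distinguished_map_iso_obj₂ {T : Triangle C} (hT : T ∈ distTriang C) {A B : C}
    (eA : F.obj A ≅ T.obj₁) (eB : F.obj B ≅ T.obj₃) :
    ∃ (M : C) (f : A ⟶ M) (g : M ⟶ B) (h : B ⟶ A⟦(1:ℤ)⟧),
      Triangle.mk f g h ∈ distTriang C ∧ Nonempty (F.obj M ≅ T.obj₂) := by
  obtain ⟨h, hh⟩ := F.map_surjective
    (eB.hom ≫ T.mor₃ ≫ eA.inv⟦(1:ℤ)⟧' ≫ (F.commShiftIso (1:ℤ)).inv.app A)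
  obtain ⟨M, f, g, hT'⟩ := distinguished_cocone_triangle₂ h
  have comm : (F.map h ≫ (F.commShiftIso (1:ℤ)).hom.app A) ≫ eA.hom⟦(1:ℤ)⟧' =
      eB.hom ≫ T.mor₃ := by
    simp [hh, ← Functor.map_comp]
  exact ⟨M, f, g, h, hT', ⟨Triangle.π₂.mapIso
    (isoTriangleOfIso₁₃ _ _ (F.map_distinguished _ hT') hT eA eB comm)⟩⟩

lemma exists_map_iso_shift_of_mem_filt (hX : ∀ x ∈ X, ∃ y ∈ X, Nonempty (F.obj y ≅ x⟦n⟧))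
    (m : ℕ) : ∀ M ∈ filt X m, ∃ M' ∈ filt X m, Nonempty (F.obj M' ≅ M⟦n⟧) := by
  induction m with
  | zero =>
    exact fun M hM ↦ ⟨M, hM, ⟨(F.map_isZero hM).iso ((shiftFunctor C n).map_isZero hM)⟩⟩
  | succ m ih =>
    rintro M ⟨A, B, f, g, h, hT, hA, hB⟩
    obtain ⟨A', hA', ⟨eA⟩⟩ := ih A hA
    obtain ⟨B', hB', ⟨eB⟩⟩ : ∃ B' ∈ X ∪ {Z : C | IsZero Z}, Nonempty (F.obj B' ≅ B⟦n⟧) := by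
      obtain hB | hB := hB
      · obtain ⟨y, hy, ⟨eB⟩⟩ := hX B hB
        exact ⟨y, Or.inl hy, ⟨eB⟩⟩
      · exact ⟨B, Or.inr hB, ⟨(F.map_isZero hB).iso ((shiftFunctor C n).map_isZero hB)⟩⟩
    obtain ⟨M', f', g', h', hT', eM⟩ :=
      exists_distinguished_map_iso_obj₂ F (Triangle.shift_distinguished _ hT n) eA eB
    exact ⟨M', ⟨A', B', f', g', h', hT', hA', hB'⟩, eM⟩

lemma exists_map_iso_shift_of_mem_filtClosure
    (hX : ∀ x ∈ X, ∃ y ∈ X, Nonempty (F.obj y ≅ x⟦n⟧)) {M : C} (hM : M ∈ filtClosure X) :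
    ∃ M' ∈ filtClosure X, Nonempty (F.obj M' ≅ M⟦n⟧) := by
  obtain ⟨m, hm⟩ := hM
  obtain ⟨M', hM', e⟩ := exists_map_iso_shift_of_mem_filt F n hX m M hm
  exact ⟨M', ⟨m, hM'⟩, e⟩

end Functor

section

omit [Preadditive C] [HasZeroObject C] [HasShift C ℤ] [∀ n : ℤ, (shiftFunctor C n).Additive]
  [Pretriangulated C]

def mutation (X : Set C) (γ : C → C) (S : Set C) : Set C := X ∪ γ '' (S \ X)

lemma mutation_mutation_iso {S X : Set C} {γ δ : C → C} (hX : X ⊆ S)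
    (hγ : ∀ Y ∈ S \ X, γ Y ∉ X) (hδ : ∀ Y ∈ S \ X, Nonempty (δ (γ Y) ≅ Y)) :
    (∀ W ∈ mutation X δ (mutation X γ S), ∃ Y ∈ S, Nonempty (W ≅ Y)) ∧
      (∀ Y ∈ S, ∃ W ∈ mutation X δ (mutation X γ S), Nonempty (W ≅ Y)) := by
  constructor
  · rintro W (hW | ⟨_, ⟨hZ | ⟨Y, hY, rfl⟩, hZX⟩, rfl⟩)
    · exact ⟨W, hX hW, ⟨Iso.refl W⟩⟩
    · exact absurd hZ hZX
    · exact ⟨Y, hY.1, hδ Y hY⟩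
  · intro Y hY
    by_cases hYX : Y ∈ X
    · exact ⟨Y, Or.inl hYX, ⟨Iso.refl Y⟩⟩
    · exact ⟨δ (γ Y), Or.inr ⟨γ Y, ⟨Or.inr ⟨Y, ⟨hY, hYX⟩, rfl⟩, hγ Y ⟨hY, hYX⟩⟩, rfl⟩,
        hδ Y ⟨hY, hYX⟩⟩

end

omit [Preadditive C] [HasZeroObject C] [∀ n : ℤ, (shiftFunctor C n).Additive] [Pretriangulated C] in
lemma NuShiftStable.exists_iso_shift_neg_one {ν : C ⥤ C} [ν.CommShift ℤ] {X : Set C}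
    (h : NuShiftStable ν X) : ∀ z ∈ X, ∃ x ∈ X, Nonempty (ν.obj x ≅ z⟦(-1:ℤ)⟧) := by
  intro z hz
  obtain ⟨x, hx, ⟨η⟩⟩ := h.2 z hz
  exact ⟨x, hx, ⟨(shiftShiftNeg (ν.obj x) (1:ℤ)).symm ≪≫
    (shiftFunctor C (-1:ℤ)).mapIso (((ν.commShiftIso (1:ℤ)).app x).symm ≪≫ η)⟩⟩

section Mutation

variable {k} {ν : C ⥤ C} [ν.CommShift ℤ] [ν.IsTriangulated] {X : Set C} {Y : C}

lemma beta_alpha_iso_self (e : (Y ⟶ Y) ≃ₗ[k] Module.Dual k (Y ⟶ ν.obj Y))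
    (hν : ∀ x ∈ X, ∃ z ∈ X, Nonempty (ν.obj (x⟦(1:ℤ)⟧) ≅ z))
    (hY : ¬ IsZero Y) (hYbrick : ∀ f : Y ⟶ Y, f ≠ 0 → IsIso f)
    (hYl : Y ∈ leftOrth X) (hYr : Y ∈ rightOrth X)
    {W B₀ : C} {f₀ : W ⟶ Y⟦(-1:ℤ)⟧} {g₀ : Y⟦(-1:ℤ)⟧ ⟶ B₀} {h₀ : B₀ ⟶ W⟦(1:ℤ)⟧}
    (hα : MinTriangle (leftOrth X) (filtClosure X) f₀ g₀ h₀)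
    {A₁ V : C} {f₁ : A₁ ⟶ W⟦(1:ℤ)⟧} {g₁ : W⟦(1:ℤ)⟧ ⟶ V} {h₁ : V ⟶ A₁⟦(1:ℤ)⟧}
    (hβ : MinTriangle (filtClosure X) (rightOrth X) f₁ g₁ h₁) :
    Nonempty (V ≅ Y) := by
  obtain ⟨hT₀, -, hB₀, -, hmin₀⟩ := hα
  obtain ⟨hT₁, hA₁, -, hap₁, hmin₁⟩ := hβ
  have hYr' := rightOrth_subset_rightOrth_filtClosure X hYr
  let ι : Y⟦(-1:ℤ)⟧⟦(1:ℤ)⟧ ≅ Y := shiftNegShift Y 1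
  have hT₂ : Triangle.mk h₀ ((-f₀⟦(1:ℤ)⟧') ≫ ι.hom) (ι.inv ≫ (-g₀⟦(1:ℤ)⟧')) ∈ distTriang C :=
    distinguished_mk_comp_iso₃ (rot_of_distTriang _ (rot_of_distTriang _ hT₀)) ι
  obtain ⟨r⟩ := nonempty_retract_cone_of_isRightApprox hT₁ hT₂ hap₁ hmin₁ hA₁
    (isRightApprox_of_distinguished hT₂ hYr') hB₀
  refine r.nonempty_iso_of_brick (fun hV ↦ hY ?_) hYbrick
  have : IsIso f₁ := (Triangle.isZero₃_iff_isIso₁ _ hT₁).1 hV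
  have hW : W⟦(1:ℤ)⟧ ∈ filtClosure X := mem_filtClosure_of_iso (asIso f₁) hA₁
  have hf₀ : f₀ = 0 := by
    have := hYr' _ hW (f₀⟦(1:ℤ)⟧' ≫ ι.hom)
    rwa [Preadditive.IsIso.comp_right_eq_zero, Functor.map_eq_zero_iff] at this
  have : IsIso g₀ := (Triangle.isZero₁_iff_isIso₂ _ hT₀).1 (hmin₀.isZero_of_eq_zero hf₀)
  have hνY : ν.obj Y ∈ filtClosure X := mem_filtClosure_of_iso (ν.mapIso ι)
    (map_shift_mem_filtClosure ν 1 hν (mem_filtClosure_of_iso (asIso g₀).symm hB₀))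
  exact isZero_of_forall_hom_serre_eq_zero e
    (leftOrth_subset_leftOrth_filtClosure X hYl _ hνY)

lemma alpha_beta_iso_self (e : ∀ Z : C, (Z ⟶ Z) ≃ₗ[k] Module.Dual k (Z ⟶ ν.obj Z))
    [ν.Full] (hν : ∀ z ∈ X, ∃ x ∈ X, Nonempty (ν.obj x ≅ z⟦(-1:ℤ)⟧))
    (hY : ¬ IsZero Y) (hYbrick : ∀ f : Y ⟶ Y, f ≠ 0 → IsIso f)
    (hYl : Y ∈ leftOrth X) (hYr : Y ∈ rightOrth X)
    {A₀ W : C} {f₀ : A₀ ⟶ Y⟦(1:ℤ)⟧} {g₀ : Y⟦(1:ℤ)⟧ ⟶ W} {h₀ : W ⟶ A₀⟦(1:ℤ)⟧}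
    (hβ : MinTriangle (filtClosure X) (rightOrth X) f₀ g₀ h₀)
    {V B₁ : C} {f₁ : V ⟶ W⟦(-1:ℤ)⟧} {g₁ : W⟦(-1:ℤ)⟧ ⟶ B₁} {h₁ : B₁ ⟶ V⟦(1:ℤ)⟧}
    (hα : MinTriangle (leftOrth X) (filtClosure X) f₁ g₁ h₁) :
    Nonempty (V ≅ Y) := by
  obtain ⟨hT₀, hA₀, -, -, hmin₀⟩ := hβ
  obtain ⟨hT₁, hVl, hB₁, hap₁, hmin₁⟩ := hα
  have hYl' := leftOrth_subset_leftOrth_filtClosure X hYl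
  let κ : Y⟦(1:ℤ)⟧⟦(-1:ℤ)⟧ ≅ Y := shiftShiftNeg Y 1
  -- `Y → W⟦-1⟧ → A₀ → Y⟦1⟧`; its first map is a right `⊥X`-approximation because `A₀ ∈ F(X)`
  have hT₂ := distinguished_iso₁_comp_mk
    (inv_rot_of_distTriang _ (inv_rot_of_distTriang _ hT₀)) κ
  obtain ⟨r⟩ := nonempty_retract_of_isRightApprox hap₁ hmin₁ hVl
    (isRightApprox_of_distinguished hT₂
      fun Z hZ ↦ leftOrth_subset_leftOrth_filtClosure X hZ _ hA₀) hYl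
  refine r.nonempty_iso_of_brick (fun hV ↦ hY ?_) hYbrick
  have : IsIso g₁ := (Triangle.isZero₁_iff_isIso₂ _ hT₁).1 hV
  have hW : W⟦(-1:ℤ)⟧ ∈ filtClosure X := mem_filtClosure_of_iso (asIso g₁).symm hB₁
  have hg₀ : g₀ = 0 := by
    have := hYl' _ hW (κ.inv ≫ g₀⟦(-1:ℤ)⟧')
    rwa [Preadditive.IsIso.comp_left_eq_zero, Functor.map_eq_zero_iff] at this
  obtain ⟨s, hs⟩ := Triangle.coyoneda_exact₂ _ hT₀ (𝟙 _)
    (by rw [Triangle.mk_mor₂, hg₀]; exact comp_zero)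
  have : IsIso f₀ := hmin₀.isIso_of_comp_eq_id hs.symm
  obtain ⟨M, hM, ⟨η⟩⟩ := exists_map_iso_shift_of_mem_filtClosure ν (-1) hν
    (mem_filtClosure_of_iso (asIso f₀) hA₀)
  have hM0 : IsZero M := isZero_of_forall_hom_serre_eq_zero (e M) fun f ↦ by
    have := rightOrth_subset_rightOrth_filtClosure X hYr _ hM (f ≫ η.hom ≫ κ.hom)
    rwa [Preadditive.IsIso.comp_right_eq_zero] at this
  exact (ν.map_isZero hM0).of_iso (κ.symm ≪≫ η.symm)

end Mutation

theorem mutation_inverse (ν : C ⥤ C) [ν.IsEquivalence] [ν.CommShift ℤ] [ν.IsTriangulated]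
    (e : ∀ X Y : C, (X ⟶ Y) ≃ₗ[k] Module.Dual k (Y ⟶ ν.obj X))
    (S X : Set C) (hS : SimpleMindedSystem S) (hX : X ⊆ S)
    (hstab : NuShiftStable ν X)
    (α : C → C)
    (hα : ∀ Y ∈ S \ X, ∃ (B : C) (f : α Y ⟶ Y⟦(-1:ℤ)⟧) (g : Y⟦(-1:ℤ)⟧ ⟶ B)
      (h : B ⟶ (α Y)⟦(1:ℤ)⟧), MinTriangle (leftOrth X) (filtClosure X) f g h)
    (β : C → C)
    (hβ : ∀ Y ∈ S \ X, ∃ (A : C) (f : A ⟶ Y⟦(1:ℤ)⟧) (g : Y⟦(1:ℤ)⟧ ⟶ β Y)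
      (h : β Y ⟶ A⟦(1:ℤ)⟧), MinTriangle (filtClosure X) (rightOrth X) f g h)
    (β' : C → C)
    (hβ' : ∀ Z ∈ (X ∪ α '' (S \ X)) \ X, ∃ (A : C) (f : A ⟶ Z⟦(1:ℤ)⟧)
      (g : Z⟦(1:ℤ)⟧ ⟶ β' Z) (h : β' Z ⟶ A⟦(1:ℤ)⟧),
      MinTriangle (filtClosure X) (rightOrth X) f g h)
    (α' : C → C)
    (hα' : ∀ Z ∈ (X ∪ β '' (S \ X)) \ X, ∃ (B : C) (f : α' Z ⟶ Z⟦(-1:ℤ)⟧)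
      (g : Z⟦(-1:ℤ)⟧ ⟶ B) (h : B ⟶ (α' Z)⟦(1:ℤ)⟧),
      MinTriangle (leftOrth X) (filtClosure X) f g h) :
    ((∀ W ∈ X ∪ β' '' ((X ∪ α '' (S \ X)) \ X), ∃ Y ∈ S, Nonempty (W ≅ Y)) ∧
      (∀ Y ∈ S, ∃ W ∈ X ∪ β' '' ((X ∪ α '' (S \ X)) \ X), Nonempty (W ≅ Y))) ∧
    ((∀ W ∈ X ∪ α' '' ((X ∪ β '' (S \ X)) \ X), ∃ Y ∈ S, Nonempty (W ≅ Y)) ∧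
      (∀ Y ∈ S, ∃ W ∈ X ∪ α' '' ((X ∪ β '' (S \ X)) \ X), Nonempty (W ≅ Y))) := by
  obtain ⟨hbricks, horth⟩ := hS.1
  have hSX : ∀ Y ∈ S \ X, Y ∈ leftOrth X ∧ Y ∈ rightOrth X := fun Y ⟨hY, hYX⟩ ↦
    ⟨fun x hx ↦ horth Y hY x (hX hx) (fun h ↦ hYX (h ▸ hx)),
      fun x hx ↦ horth x (hX hx) Y hY (fun h ↦ hYX (h ▸ hx))⟩
  have hαX : ∀ Y ∈ S \ X, α Y ∉ X := fun Y hY hx ↦ by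
    obtain ⟨_, _, _, _, _, hl, _⟩ := hα Y hY
    exact (hbricks _ (hX hx)).1 (isZero_of_mem_leftOrth_self hx hl)
  have hβX : ∀ Y ∈ S \ X, β Y ∉ X := fun Y hY hx ↦ by
    obtain ⟨_, _, _, _, _, _, hr, _⟩ := hβ Y hY
    exact (hbricks _ (hX hx)).1 (isZero_of_mem_rightOrth_self hx hr)
  refine ⟨mutation_mutation_iso hX hαX fun Y hY ↦ ?_, mutation_mutation_iso hX hβX fun Y hY ↦ ?_⟩
  · obtain ⟨_, _, _, _, hmt⟩ := hα Y hY
    obtain ⟨_, _, _, _, hmt'⟩ := hβ' (α Y) ⟨Or.inr ⟨Y, hY, rfl⟩, hαX Y hY⟩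
    exact beta_alpha_iso_self (e Y Y) hstab.1 (hbricks Y hY.1).1 (hbricks Y hY.1).2
      (hSX Y hY).1 (hSX Y hY).2 hmt hmt'
  · obtain ⟨_, _, _, _, hmt⟩ := hβ Y hY
    obtain ⟨_, _, _, _, hmt'⟩ := hα' (β Y) ⟨Or.inr ⟨Y, hY, rfl⟩, hβX Y hY⟩
    exact alpha_beta_iso_self (fun Z ↦ e Z Z) hstab.exists_iso_shift_neg_one
      (hbricks Y hY.1).1 (hbricks Y hY.1).2 (hSX Y hY).1 (hSX Y hY).2 hmt hmt'
end
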